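/- arXiv:2505.22967 — 3 statements merged into one kernel-verified Lean document; each statement's English description precedes it below -/
import Mathlib

section
/- Let E : V → V → Prop be fully connected with respect to input i and output o, and let a b : V satisfy E a b. Then the subdivision E' of E at (a,b) is fully connected with respect to input (some i) and output (some o): every vertex of Option V (including the new vertex none) is reachable from some i under E' and reaches some o under E'. -/
/-- The subdivision of an edge relation `E` at the edge `(a,b)`: a new vertex
(`none`) is inserted on the edge from `a` to `b`. -/
def Subdiv {V : Type*} (E : V → V → Prop) (a b : V) :
    Option V → Option V → Prop
  | some x, some y => E x y ∧ ¬(x = a ∧ y = b)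
  | some x, none => x = a
  | none, some y => y = b
  | none, none => False

/-!
Every edge of `E` survives in the subdivision, except `a → b`, which is replaced by the path
`a → none → b`; hence paths of `E` lift to paths between the old vertices. The new vertex is
reached through `a` and leaves through `b`.
-/

namespace Subdiv

open Relation

variable {V : Type*} {E : V → V → Prop} {a b : V}

theorem some_none : Subdiv E a b (some a) none := rfl

theorem none_some : Subdiv E a b none (some b) := rfl

theorem reflTransGen_some_of_rel {x y : V} (h : E x y) :
    ReflTransGen (Subdiv E a b) (some x) (some y) := by
  by_cases hxy : x = a ∧ y = b
  · obtain ⟨rfl, rfl⟩ := hxy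
    exact .tail (.single some_none) none_some
  · exact .single ⟨h, hxy⟩

theorem reflTransGen_some {x y : V} (h : ReflTransGen E x y) :
    ReflTransGen (Subdiv E a b) (some x) (some y) :=
  h.lift' some fun _ _ ↦ reflTransGen_some_of_rel

end Subdiv

theorem subdiv_fullyConnected_general {V : Type*} (E : V → V → Prop) (i o : V)
    (hconn : ∀ v : V, Relation.ReflTransGen E i v ∧ Relation.ReflTransGen E v o)
    (a b : V) :
    ∀ v : Option V,
      Relation.ReflTransGen (Subdiv E a b) (some i) v ∧
      Relation.ReflTransGen (Subdiv E a b) v (some o) := by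
  rintro (_ | x)
  · exact ⟨(Subdiv.reflTransGen_some (hconn a).1).tail Subdiv.some_none,
      .head Subdiv.none_some (Subdiv.reflTransGen_some (hconn b).2)⟩
  · exact ⟨Subdiv.reflTransGen_some (hconn x).1, Subdiv.reflTransGen_some (hconn x).2⟩

/-- Subdivision at an existing edge preserves full connectivity with respect
to the input vertex `i` and output vertex `o`. -/
theorem subdiv_fullyConnected {V : Type*} (E : V → V → Prop) (i o : V)
    (hconn : ∀ v : V, Relation.ReflTransGen E i v ∧ Relation.ReflTransGen E v o)
    (a b : V) (hab : E a b) :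
    ∀ v : Option V,
      Relation.ReflTransGen (Subdiv E a b) (some i) v ∧
      Relation.ReflTransGen (Subdiv E a b) v (some o) :=
  subdiv_fullyConnected_general E i o hconn a b
end

section
/- Let E : V → V → Prop be fully connected with respect to input i and output o, let a b c : V satisfy E a b and E b c with i ≠ b and o ≠ b, and assume a is the unique in-neighbor of b (∀ x, E x b → x = a) and c is the unique out-neighbor of b (∀ y, E b y → y = c). Then the deletion E' of b with bypass edge satisfies: for every vertex x ≠ b, Relation.ReflTransGen E' i x and Relation.ReflTransGen E' x o. -/
/-!
Collapse `b` onto `a`, fixing every other vertex. Since `a` is the only in-neighbour and `c` the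
only out-neighbour of `b`, this map sends an edge `a → b` to a loop, an edge `b → c` to the bypass
edge `a → c`, and every other edge to itself in the bypass relation. So it maps `E`-paths to
bypass paths, and it fixes `i`, `o` and every `x ≠ b`.
-/

section

variable {V : Type*}

def bypass (E : V → V → Prop) (a b c : V) : V → V → Prop :=
  fun u v => (E u v ∧ u ≠ b ∧ v ≠ b) ∨ (u = a ∧ v = c)

variable [DecidableEq V] {E : V → V → Prop} {a b c : V}

theorem reflTransGen_bypass_update_of_rel (hin : ∀ x, E x b → x = a)
    (hout : ∀ y, E b y → y = c) {u v : V} (huv : E u v) :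
    Relation.ReflTransGen (bypass E a b c) (Function.update id b a u)
      (Function.update id b a v) := by
  by_cases hu : u = b <;> by_cases hv : v = b
  · rw [hu, hv]
  · rw [hu, Function.update_self, Function.update_of_ne hv, hout v (hu ▸ huv)]
    exact .single (Or.inr ⟨rfl, rfl⟩)
  · rw [hv, Function.update_self, Function.update_of_ne hu, hin u (hv ▸ huv)]
    rfl
  · rw [Function.update_of_ne hu, Function.update_of_ne hv]
    exact .single (Or.inl ⟨huv, hu, hv⟩)

theorem reflTransGen_bypass_update (hin : ∀ x, E x b → x = a)
    (hout : ∀ y, E b y → y = c) {u v : V} (huv : Relation.ReflTransGen E u v) :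
    Relation.ReflTransGen (bypass E a b c) (Function.update id b a u)
      (Function.update id b a v) :=
  Relation.ReflTransGen.lift' (Function.update id b a)
    (fun _ _ ↦ reflTransGen_bypass_update_of_rel hin hout) _ _ huv

end

theorem delete_fullyConnected_general {V : Type*} (E : V → V → Prop) (i o : V)
    (hconn : ∀ v : V, Relation.ReflTransGen E i v ∧ Relation.ReflTransGen E v o)
    (a b c : V)
    (hib : i ≠ b) (hob : o ≠ b)
    (hin : ∀ x, E x b → x = a) (hout : ∀ y, E b y → y = c) :
    ∀ x : V, x ≠ b →
      Relation.ReflTransGen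
        (fun u v => (E u v ∧ u ≠ b ∧ v ≠ b) ∨ (u = a ∧ v = c)) i x ∧
      Relation.ReflTransGen
        (fun u v => (E u v ∧ u ≠ b ∧ v ≠ b) ∨ (u = a ∧ v = c)) x o := by
  classical
  intro x hx
  have hfrom := reflTransGen_bypass_update hin hout (hconn x).1
  have hto := reflTransGen_bypass_update hin hout (hconn x).2
  simp only [Function.update_of_ne hib, Function.update_of_ne hob,
    Function.update_of_ne hx, id] at hfrom hto
  exact ⟨hfrom, hto⟩

/-- Deleting a node `b` on a linear path `a → b → c` (with bypass edge)
preserves full connectivity: every remaining vertex is still reachable from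
the input `i` and still reaches the output `o`. -/
theorem delete_fullyConnected {V : Type*} (E : V → V → Prop) (i o : V)
    (hconn : ∀ v : V, Relation.ReflTransGen E i v ∧ Relation.ReflTransGen E v o)
    (a b c : V) (hab : E a b) (hbc : E b c)
    (hib : i ≠ b) (hob : o ≠ b)
    (hin : ∀ x, E x b → x = a) (hout : ∀ y, E b y → y = c) :
    ∀ x : V, x ≠ b →
      Relation.ReflTransGen
        (fun u v => (E u v ∧ u ≠ b ∧ v ≠ b) ∨ (u = a ∧ v = c)) i x ∧
      Relation.ReflTransGen
        (fun u v => (E u v ∧ u ≠ b ∧ v ≠ b) ∨ (u = a ∧ v = c)) x o :=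
  delete_fullyConnected_general E i o hconn a b c hib hob hin hout
end

section
/- Let (A1, on VA1, input iA1, output oA1), (A2, on VA2, input iA2, output oA2), (B1, on VB1, input iB1, output oB1), (B2, on VB2, input iB2, output oB2) be four typed directed graphs with labels in L, each well-typed, acyclic, and fully connected with respect to its own input and output. Suppose the crossover type conditions ToutA1 oA1 = TinB2 iB2 and ToutA2 oA2 = TinB1 iB1 hold. Then both swapped serial compositions — the composition of A1 with B2 (through oA1 and iB2) and the composition of A2 with B1 (through oA2 and iB1) — are well-typed, acyclic, and fully connected with respect to input Sum.inl iA1 and output Sum.inr oB2, respectively input Sum.inl iA2 and output Sum.inr oB1. -/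
/-- Serial composition of two edge relations on `V1 ⊕ V2`, connecting the
designated output `o1` of the first graph to the designated input `i2` of
the second. -/
def SerialComp {V1 V2 : Type*} (E1 : V1 → V1 → Prop) (E2 : V2 → V2 → Prop)
    (o1 : V1) (i2 : V2) : V1 ⊕ V2 → V1 ⊕ V2 → Prop
  | Sum.inl x, Sum.inl y => E1 x y
  | Sum.inr x, Sum.inr y => E2 x y
  | Sum.inl x, Sum.inr y => x = o1 ∧ y = i2
  | Sum.inr _, Sum.inl _ => False

open Relation

section TypedGraph

variable {V L : Type*}

def IsWellTyped (E : V → V → Prop) (Tin Tout : V → L) : Prop :=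
  ∀ u v, E u v → Tout u = Tin v

def IsAcyclic (E : V → V → Prop) : Prop :=
  ∀ v, ¬ TransGen E v v

def IsFullyConnected (E : V → V → Prop) (i o : V) : Prop :=
  ∀ v, ReflTransGen E i v ∧ ReflTransGen E v o

end TypedGraph

namespace SerialComp

variable {V1 V2 L : Type*} {E1 : V1 → V1 → Prop} {E2 : V2 → V2 → Prop} {o1 : V1} {i2 : V2}

theorem isWellTyped {Tin1 Tout1 : V1 → L} {Tin2 Tout2 : V2 → L}
    (h1 : IsWellTyped E1 Tin1 Tout1) (h2 : IsWellTyped E2 Tin2 Tout2)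
    (hty : Tout1 o1 = Tin2 i2) :
    IsWellTyped (SerialComp E1 E2 o1 i2) (Sum.elim Tin1 Tin2) (Sum.elim Tout1 Tout2) := by
  rintro (u | u) (v | v) h
  · exact h1 u v h
  · obtain ⟨rfl, rfl⟩ := h
    exact hty
  · exact h.elim
  · exact h2 u v h

/-- No edge of the composite leads from the second component back to the first, so its paths
embed into the lexicographic sum of the two transitive closures, which is transitive. -/
theorem transGen_le_lex :
    TransGen (SerialComp E1 E2 o1 i2) ≤ Sum.Lex (TransGen E1) (TransGen E2) := by
  rw [← transGen_eq_self (r := Sum.Lex (TransGen E1) (TransGen E2))]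
  refine TransGen.mono ?_
  rintro (u | u) (v | v) h
  · exact Sum.Lex.inl (.single h)
  · exact Sum.Lex.sep u v
  · exact h.elim
  · exact Sum.Lex.inr (.single h)

theorem isAcyclic (h1 : IsAcyclic E1) (h2 : IsAcyclic E2) :
    IsAcyclic (SerialComp E1 E2 o1 i2) := by
  rintro (v | v) hv
  · exact h1 v (Sum.lex_inl_inl.mp (transGen_le_lex _ _ hv))
  · exact h2 v (Sum.lex_inr_inr.mp (transGen_le_lex _ _ hv))

theorem bridge : SerialComp E1 E2 o1 i2 (.inl o1) (.inr i2) :=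
  ⟨rfl, rfl⟩

theorem reflTransGen_inl {a b : V1} (h : ReflTransGen E1 a b) :
    ReflTransGen (SerialComp E1 E2 o1 i2) (.inl a) (.inl b) :=
  h.lift Sum.inl fun _ _ => id

theorem reflTransGen_inr {a b : V2} (h : ReflTransGen E2 a b) :
    ReflTransGen (SerialComp E1 E2 o1 i2) (.inr a) (.inr b) :=
  h.lift Sum.inr fun _ _ => id

theorem reflTransGen_inl_inr {a : V1} {b : V2} (ha : ReflTransGen E1 a o1)
    (hb : ReflTransGen E2 i2 b) :
    ReflTransGen (SerialComp E1 E2 o1 i2) (.inl a) (.inr b) :=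
  ((reflTransGen_inl ha).tail bridge).trans (reflTransGen_inr hb)

theorem isFullyConnected {i1 : V1} {o2 : V2}
    (h1 : IsFullyConnected E1 i1 o1) (h2 : IsFullyConnected E2 i2 o2) :
    IsFullyConnected (SerialComp E1 E2 o1 i2) (.inl i1) (.inr o2) := by
  rintro (v | v)
  · exact ⟨reflTransGen_inl (h1 v).1, reflTransGen_inl_inr (h1 v).2 (h2 i2).2⟩
  · exact ⟨reflTransGen_inl_inr (h1 i1).2 (h2 v).1, reflTransGen_inr (h2 v).2⟩

end SerialComp

/-- Crossover: given four well-typed, acyclic, fully connected typed directed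
graphs `A1, A2, B1, B2` with type-compatible crossover interfaces
(`ToutA1 oA1 = TinB2 iB2` and `ToutA2 oA2 = TinB1 iB1`), both swapped serial
compositions `A1 ⋈ B2` and `A2 ⋈ B1` are well-typed, acyclic, and fully
connected with respect to their inherited inputs and outputs. -/
theorem crossover_valid {VA1 VA2 VB1 VB2 L : Type*}
    (A1 : VA1 → VA1 → Prop) (TinA1 ToutA1 : VA1 → L) (iA1 oA1 : VA1)
    (A2 : VA2 → VA2 → Prop) (TinA2 ToutA2 : VA2 → L) (iA2 oA2 : VA2)
    (B1 : VB1 → VB1 → Prop) (TinB1 ToutB1 : VB1 → L) (iB1 oB1 : VB1)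
    (B2 : VB2 → VB2 → Prop) (TinB2 ToutB2 : VB2 → L) (iB2 oB2 : VB2)
    (hwtA1 : ∀ u v, A1 u v → ToutA1 u = TinA1 v)
    (hwtA2 : ∀ u v, A2 u v → ToutA2 u = TinA2 v)
    (hwtB1 : ∀ u v, B1 u v → ToutB1 u = TinB1 v)
    (hwtB2 : ∀ u v, B2 u v → ToutB2 u = TinB2 v)
    (hacA1 : ∀ v, ¬ Relation.TransGen A1 v v)
    (hacA2 : ∀ v, ¬ Relation.TransGen A2 v v)
    (hacB1 : ∀ v, ¬ Relation.TransGen B1 v v)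
    (hacB2 : ∀ v, ¬ Relation.TransGen B2 v v)
    (hcoA1 : ∀ v, Relation.ReflTransGen A1 iA1 v ∧ Relation.ReflTransGen A1 v oA1)
    (hcoA2 : ∀ v, Relation.ReflTransGen A2 iA2 v ∧ Relation.ReflTransGen A2 v oA2)
    (hcoB1 : ∀ v, Relation.ReflTransGen B1 iB1 v ∧ Relation.ReflTransGen B1 v oB1)
    (hcoB2 : ∀ v, Relation.ReflTransGen B2 iB2 v ∧ Relation.ReflTransGen B2 v oB2)
    (hty1 : ToutA1 oA1 = TinB2 iB2) (hty2 : ToutA2 oA2 = TinB1 iB1) :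
    ((∀ u v : VA1 ⊕ VB2, SerialComp A1 B2 oA1 iB2 u v →
        Sum.elim ToutA1 ToutB2 u = Sum.elim TinA1 TinB2 v) ∧
      (∀ v : VA1 ⊕ VB2, ¬ Relation.TransGen (SerialComp A1 B2 oA1 iB2) v v) ∧
      (∀ v : VA1 ⊕ VB2,
        Relation.ReflTransGen (SerialComp A1 B2 oA1 iB2) (Sum.inl iA1) v ∧
        Relation.ReflTransGen (SerialComp A1 B2 oA1 iB2) v (Sum.inr oB2))) ∧
    ((∀ u v : VA2 ⊕ VB1, SerialComp A2 B1 oA2 iB1 u v →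
        Sum.elim ToutA2 ToutB1 u = Sum.elim TinA2 TinB1 v) ∧
      (∀ v : VA2 ⊕ VB1, ¬ Relation.TransGen (SerialComp A2 B1 oA2 iB1) v v) ∧
      (∀ v : VA2 ⊕ VB1,
        Relation.ReflTransGen (SerialComp A2 B1 oA2 iB1) (Sum.inl iA2) v ∧
        Relation.ReflTransGen (SerialComp A2 B1 oA2 iB1) v (Sum.inr oB1))) := by
  exact ⟨⟨SerialComp.isWellTyped hwtA1 hwtB2 hty1, SerialComp.isAcyclic hacA1 hacB2,
      SerialComp.isFullyConnected hcoA1 hcoB2⟩,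
    ⟨SerialComp.isWellTyped hwtA2 hwtB1 hty2, SerialComp.isAcyclic hacA2 hacB1,
      SerialComp.isFullyConnected hcoA2 hcoB1⟩⟩
end
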